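/- Let E⁰, E^δ : [0,T] → ℝ be nonnegative C¹ functions, g : [0,T] → ℝ nonnegative continuous, and suppose dE⁰/dt ≤ −(1/4)g and dE^δ/dt ≤ K·g·E^δ on [0,T] for some constant K ≥ 0. If N ≥ 4K(E⁰(0)+1), then the function t ↦ (E⁰(t)+1)^N·E^δ(t) is nonincreasing on [0,T], and in particular E^δ(t) ≤ E^δ(0)·(E⁰(0)+1)^N for all t ∈ [0,T]. -/

import Mathlib

/-!
The weight `(E⁰ + 1)^N` decays at rate `N g / (4 (E⁰ + 1))`, which beats the growth rate `K g`
of `E^δ` as soon as `N ≥ 4 K (E⁰ + 1)`; since `E⁰` is nonincreasing, this holds along the whole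
interval once it holds at `t = 0`.
-/

open Set

theorem antitoneOn_of_forall_hasDerivAt_nonpos {D : Set ℝ} (hD : Convex ℝ D) {f f' : ℝ → ℝ}
    (hf : ∀ x ∈ D, HasDerivAt f (f' x) x) (hf'₀ : ∀ x ∈ D, f' x ≤ 0) : AntitoneOn f D :=
  antitoneOn_of_hasDerivWithinAt_nonpos hD
    (fun x hx => (hf x hx).continuousAt.continuousWithinAt)
    (fun x hx => (hf x (interior_subset hx)).hasDerivWithinAt)
    (fun x hx => hf'₀ x (interior_subset hx))

theorem rpow_mul_deriv_nonpos {a b a' b' g c K N : ℝ} (hN : 0 ≤ N) (ha : 0 < a) (hb : 0 ≤ b)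
    (hg : 0 ≤ g) (ha' : a' ≤ -c * g) (hb' : b' ≤ K * g * b) (hKN : K * a ≤ c * N) :
    a' * N * a ^ (N - 1) * b + a ^ N * b' ≤ 0 := by
  have hsplit : a' * N * a ^ (N - 1) * b + a ^ N * b' = a ^ (N - 1) * (N * b * a' + a * b') := by
    rw [show a ^ N = a ^ (N - 1) * a by rw [← Real.rpow_add_one ha.ne', sub_add_cancel]]
    ring
  have hbracket : N * b * a' + a * b' ≤ 0 :=
    calc N * b * a' + a * b' ≤ N * b * (-c * g) + a * (K * g * b) :=
          add_le_add (mul_le_mul_of_nonneg_left ha' (by positivity))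
            (mul_le_mul_of_nonneg_left hb' ha.le)
      _ = g * b * (K * a - c * N) := by ring
      _ ≤ 0 := mul_nonpos_of_nonneg_of_nonpos (by positivity) (by linarith)
  rw [hsplit]
  exact mul_nonpos_of_nonneg_of_nonpos (by positivity) hbracket

theorem antitoneOn_rpow_mul_of_dissipation {D : Set ℝ} (hD : Convex ℝ D)
    {u v u' v' g : ℝ → ℝ} {c K N : ℝ} (hN : 0 ≤ N)
    (hu : ∀ x ∈ D, 0 < u x) (hv : ∀ x ∈ D, 0 ≤ v x) (hg : ∀ x ∈ D, 0 ≤ g x)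
    (hu' : ∀ x ∈ D, HasDerivAt u (u' x) x) (hv' : ∀ x ∈ D, HasDerivAt v (v' x) x)
    (hdissip : ∀ x ∈ D, u' x ≤ -c * g x) (hgrowth : ∀ x ∈ D, v' x ≤ K * g x * v x)
    (hKN : ∀ x ∈ D, K * u x ≤ c * N) :
    AntitoneOn (fun t => u t ^ N * v t) D :=
  antitoneOn_of_forall_hasDerivAt_nonpos hD
    (fun x hx => ((hu' x hx).rpow_const (Or.inl (hu x hx).ne')).mul (hv' x hx))
    (fun x hx => rpow_mul_deriv_nonpos hN (hu x hx) (hv x hx) (hg x hx) (hdissip x hx)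
      (hgrowth x hx) (hKN x hx))

theorem energy_propagation_general
    (T : ℝ) (hT : 0 ≤ T)
    (E0 Eδ E0' Eδ' g : ℝ → ℝ) (K N : ℝ) (hK : 0 ≤ K)
    (hE0nonneg : ∀ t ∈ Icc 0 T, 0 ≤ E0 t)
    (hEδnonneg : ∀ t ∈ Icc 0 T, 0 ≤ Eδ t)
    (hgnonneg : ∀ t ∈ Icc 0 T, 0 ≤ g t)
    (hE0deriv : ∀ t ∈ Icc 0 T, HasDerivAt E0 (E0' t) t)
    (hEδderiv : ∀ t ∈ Icc 0 T, HasDerivAt Eδ (Eδ' t) t)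
    (hE0dissip : ∀ t ∈ Icc 0 T, E0' t ≤ -(1 / 4) * g t)
    (hEδgrowth : ∀ t ∈ Icc 0 T, Eδ' t ≤ K * g t * Eδ t)
    (hN : N ≥ 4 * K * (E0 0 + 1)) :
    AntitoneOn (fun t => (E0 t + 1) ^ N * Eδ t) (Icc 0 T) ∧
    ∀ t ∈ Icc 0 T, Eδ t ≤ Eδ 0 * (E0 0 + 1) ^ N := by
  have h0 : (0 : ℝ) ∈ Icc 0 T := left_mem_Icc.2 hT
  have hN0 : 0 ≤ N := by nlinarith [hE0nonneg 0 h0]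
  have hE0anti : AntitoneOn E0 (Icc 0 T) :=
    antitoneOn_of_forall_hasDerivAt_nonpos (convex_Icc 0 T) hE0deriv
      fun t ht => (hE0dissip t ht).trans (by linarith [hgnonneg t ht])
  have hanti : AntitoneOn (fun t => (E0 t + 1) ^ N * Eδ t) (Icc 0 T) :=
    antitoneOn_rpow_mul_of_dissipation (convex_Icc 0 T) hN0
      (fun t ht => by linarith [hE0nonneg t ht]) hEδnonneg hgnonneg
      (fun t ht => (hE0deriv t ht).add_const 1) hEδderiv hE0dissip hEδgrowth
      (fun t ht => by nlinarith [hE0anti h0 ht ht.1])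
  refine ⟨hanti, fun t ht => ?_⟩
  calc Eδ t ≤ (E0 t + 1) ^ N * Eδ t :=
        le_mul_of_one_le_left (hEδnonneg t ht)
          (Real.one_le_rpow (by linarith [hE0nonneg t ht]) hN0)
    _ ≤ (E0 0 + 1) ^ N * Eδ 0 := hanti h0 ht ht.1
    _ = Eδ 0 * (E0 0 + 1) ^ N := mul_comm _ _

/-- Abstract Grönwall-type mechanism: if `E⁰` dissipates at rate `g/4` and `E^δ`
grows at rate at most `K g E^δ`, then `(E⁰+1)^N E^δ` is nonincreasing for
`N ≥ 4K(E⁰(0)+1)`, and `E^δ(t) ≤ E^δ(0) (E⁰(0)+1)^N`. -/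
theorem energy_propagation
    (T : ℝ) (hT : 0 ≤ T)
    (E0 Eδ E0' Eδ' g : ℝ → ℝ) (K N : ℝ) (hK : 0 ≤ K)
    (hE0nonneg : ∀ t ∈ Icc 0 T, 0 ≤ E0 t)
    (hEδnonneg : ∀ t ∈ Icc 0 T, 0 ≤ Eδ t)
    (hgcont : ContinuousOn g (Icc 0 T))
    (hgnonneg : ∀ t ∈ Icc 0 T, 0 ≤ g t)
    (hE0deriv : ∀ t ∈ Icc 0 T, HasDerivAt E0 (E0' t) t)
    (hEδderiv : ∀ t ∈ Icc 0 T, HasDerivAt Eδ (Eδ' t) t)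
    (hE0'cont : ContinuousOn E0' (Icc 0 T))
    (hEδ'cont : ContinuousOn Eδ' (Icc 0 T))
    (hE0dissip : ∀ t ∈ Icc 0 T, E0' t ≤ -(1 / 4) * g t)
    (hEδgrowth : ∀ t ∈ Icc 0 T, Eδ' t ≤ K * g t * Eδ t)
    (hN : N ≥ 4 * K * (E0 0 + 1)) :
    AntitoneOn (fun t => (E0 t + 1) ^ N * Eδ t) (Icc 0 T) ∧
    ∀ t ∈ Icc 0 T, Eδ t ≤ Eδ 0 * (E0 0 + 1) ^ N :=
  energy_propagation_general T hT E0 Eδ E0' Eδ' g K N hK hE0nonneg hEδnonneg hgnonneg hE0deriv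
    hEδderiv hE0dissip hEδgrowth hN
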